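/- arXiv:2408.05929 — 3 statements merged into one kernel-verified Lean document; each statement's English description precedes it below -/
import Mathlib

section
/- Let c be a positive integer with c ≡ 2 (mod 4) and set c₁ = c/2 (so c₁ is odd), and let n be an integer. For each a with 0 ≤ a < c and gcd(a,c) = 1, let d₄(a) denote a residue modulo c₁ satisfying 8·a·d₄(a) ≡ −1 (mod c₁). Then Θ₄(c,n) := ε_{c₁} · Σ_{a mod c, gcd(a,c)=1} (8a | c₁) · e(d₄(a)·n / c₁) equals Θ₁(c₁,n) := conj(ε_{c₁}) · Σ_{a mod c₁, gcd(a,c₁)=1} (a | c₁) · e(a·n / c₁). -/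
open Finset

/-- `e(x) = exp(2πi x)`. -/
noncomputable def e (x : ℝ) : ℂ := Complex.exp (2 * Real.pi * Complex.I * x)

/-- `ε_d = 1` if `d ≡ 1 (mod 4)` and `ε_d = i` if `d ≡ 3 (mod 4)`. -/
noncomputable def epsd (d : ℕ) : ℂ := if d % 4 = 1 then 1 else Complex.I

/-!
Write `c = 2c₁` with `c₁` odd. Reduction mod `c₁` identifies the units mod `c` with the units
mod `c₁`, and the congruence `8a·d₄(a) ≡ -1` says `d₄(a) ≡ (-8a)⁻¹ (mod c₁)`, where
`b ↦ (-8b)⁻¹` permutes the units mod `c₁`. Multiplicativity of the Jacobi symbol gives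
`(8a | c₁) = (-1 | c₁)(d₄(a) | c₁)`, so `Θ₄(c, n) = ε_{c₁}(-1 | c₁) Σ_b (b | c₁) e(bn/c₁)`,
and `ε_{c₁}(-1 | c₁) = conj ε_{c₁}` because `(-1 | c₁) = ±1` according as `c₁ ≡ ±1 (mod 4)`.
-/

lemma e_intCast_add (k : ℤ) (x : ℝ) : e (k + x) = e x := by
  have h : 2 * Real.pi * Complex.I * ((k : ℝ) + x : ℝ) =
      k * (2 * Real.pi * Complex.I) + 2 * Real.pi * Complex.I * x := by
    push_cast; ring
  rw [e, h, Complex.exp_add, Complex.exp_int_mul_two_pi_mul_I, one_mul, e]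

lemma epsd_mul_jacobiSym_neg_one {m : ℕ} (hm : Odd m) :
    epsd m * (jacobiSym (-1) m : ℂ) = starRingEnd ℂ (epsd m) := by
  rw [jacobiSym.at_neg_one hm, epsd]
  rcases Nat.odd_mod_four_iff.mp (Nat.odd_iff.mp hm) with h | h
  · simp [h, ZMod.χ₄_nat_one_mod_four h]
  · simp [h, ZMod.χ₄_nat_three_mod_four h, Complex.conj_I]

lemma jacobiSym_eq_neg_one_mul_of_mul_modEq {a d : ℤ} {b : ℕ} (h : a * d ≡ -1 [ZMOD b]) :
    jacobiSym a b = jacobiSym (-1) b * jacobiSym d b := by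
  have hcop : d.gcd b = 1 := by
    obtain ⟨k, hk⟩ := (Int.modEq_iff_dvd.mp h.symm)
    exact Int.isCoprime_iff_gcd_eq_one.mp ⟨-a, k, by linear_combination -hk⟩
  have hprod : jacobiSym a b * jacobiSym d b = jacobiSym (-1) b := by
    rw [← jacobiSym.mul_left]; exact jacobiSym.mod_left' h
  calc jacobiSym a b = jacobiSym a b * jacobiSym d b ^ 2 := by rw [jacobiSym.sq_one hcop, mul_one]
    _ = jacobiSym (-1) b * jacobiSym d b := by rw [← hprod]; ring

/-- The summand `(t | m) e(t n / m)` of the twisted Gauss sum `Θ₁(m, n)`. -/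
noncomputable def jacobiGaussTerm (m : ℕ) (n t : ℤ) : ℂ :=
  (jacobiSym t m : ℂ) * e (((t * n : ℤ) : ℝ) / (m : ℝ))

lemma jacobiGaussTerm_congr {m : ℕ} (n : ℤ) {t s : ℤ} (h : t ≡ s [ZMOD m]) :
    jacobiGaussTerm m n t = jacobiGaussTerm m n s := by
  rcases eq_or_ne m 0 with rfl | hm
  · rw [Nat.cast_zero, Int.modEq_zero_iff] at h
    rw [h]
  obtain ⟨k, hk⟩ := (Int.modEq_iff_dvd.mp h.symm)
  have hdiv : ((t * n : ℤ) : ℝ) / m = (k * n : ℤ) + ((s * n : ℤ) : ℝ) / m := by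
    rw [show t = s + m * k by linarith]
    field_simp
    push_cast
    ring
  rw [jacobiGaussTerm, jacobiGaussTerm, jacobiSym.mod_left' h, hdiv, e_intCast_add]

lemma jacobiGaussTerm_val_intCast {m : ℕ} [NeZero m] (n t : ℤ) :
    jacobiGaussTerm m n (t : ZMod m).val = jacobiGaussTerm m n t :=
  jacobiGaussTerm_congr n (by rw [ZMod.val_intCast]; exact Int.mod_modEq _ _)

lemma jacobiSym_mul_e_eq_of_mul_modEq {m : ℕ} [NeZero m] (n : ℤ) {k d : ℤ}
    (h : k * d ≡ -1 [ZMOD m]) :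
    (jacobiSym k m : ℂ) * e (((d * n : ℤ) : ℝ) / m) =
      jacobiSym (-1) m * jacobiGaussTerm m n (-(k : ZMod m))⁻¹.val := by
  have hinv : (-(k : ZMod m))⁻¹ = d := by
    refine ZMod.inv_eq_of_mul_eq_one _ _ _ ?_
    have := (ZMod.intCast_eq_intCast_iff _ _ _).mpr h
    push_cast at this
    linear_combination -this
  rw [hinv, jacobiGaussTerm_val_intCast, jacobiGaussTerm, jacobiSym_eq_neg_one_mul_of_mul_modEq h]
  push_cast
  ring

section CoprimeSums

variable {M : Type*} [AddCommMonoid M]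

lemma sum_filter_coprime_eq_sum_units {m : ℕ} [NeZero m] (F : ZMod m → M) :
    ∑ b ∈ (range m).filter (fun b => b.Coprime m), F b = ∑ u : (ZMod m)ˣ, F u := by
  refine sum_bij' (fun b hb => ZMod.unitOfCoprime b (mem_filter.mp hb).2)
    (fun u _ => (u : ZMod m).val) (fun _ _ => mem_univ _) (fun u _ => ?_) (fun b hb => ?_)
    (fun u _ => ?_) (fun _ _ => rfl)
  · exact mem_filter.mpr ⟨mem_range.mpr (ZMod.val_lt _), ZMod.val_coe_unit_coprime u⟩
  · exact ZMod.val_cast_of_lt (mem_range.mp (mem_filter.mp hb).1)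
  · exact Units.ext (ZMod.natCast_zmod_val _)

lemma sum_filter_coprime_inv_mul {m : ℕ} [NeZero m] {k : ZMod m} (hk : IsUnit k)
    (F : ZMod m → M) :
    ∑ b ∈ (range m).filter (fun b => b.Coprime m), F (k * b)⁻¹ =
      ∑ b ∈ (range m).filter (fun b => b.Coprime m), F b := by
  rw [sum_filter_coprime_eq_sum_units (fun x => F (k * x)⁻¹), sum_filter_coprime_eq_sum_units]
  obtain ⟨w, rfl⟩ := hk
  simp_rw [← Units.val_mul, ZMod.inv_coe_unit]
  exact Fintype.sum_equiv ((Equiv.mulLeft w).trans (Equiv.inv _)) _ _ fun _ => rfl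

lemma sum_filter_coprime_two_mul {m : ℕ} (hm : Odd m) (F : ZMod m → M) :
    ∑ a ∈ (range (2 * m)).filter (fun a => a.Coprime (2 * m)), F a =
      ∑ b ∈ (range m).filter (fun b => b.Coprime m), F b := by
  have hpos := hm.pos
  -- the inverse lifts `b` to whichever of `b`, `b + m` is odd
  refine sum_nbij' (fun a => a % m) (fun b => if b % 2 = 1 then b else b + m)
    (fun a ha => ?_) (fun b hb => ?_) (fun a ha => ?_) (fun b hb => ?_)
    (fun a _ => by rw [ZMod.natCast_mod])
  all_goals simp only [mem_filter, mem_range, Nat.coprime_mul_iff_right,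
    Nat.coprime_two_right, Nat.odd_iff] at *
  · exact ⟨Nat.mod_lt _ hpos, (ZMod.coprime_mod_iff_coprime a m).mpr ha.2.2⟩
  · split_ifs
    · exact ⟨by omega, by omega, hb.2⟩
    · exact ⟨by omega, by omega, Nat.coprime_add_self_left.mpr hb.2⟩
  · rcases lt_or_ge a m with h | h
    · rw [Nat.mod_eq_of_lt h, if_pos ha.2.1]
    · rw [Nat.mod_eq_sub_mod h, Nat.mod_eq_of_lt (show a - m < m by omega), if_neg (by omega)]
      omega
  · split_ifs
    · exact Nat.mod_eq_of_lt hb.1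
    · rw [Nat.add_mod_right, Nat.mod_eq_of_lt hb.1]

end CoprimeSums

/-- for `c ≡ 2 (mod 4)`, `c₁ = c/2`, one has `Θ₄(c,n) = Θ₁(c₁,n)`. -/
theorem stmt_0 (c : ℕ) (hc : c % 4 = 2) (c₁ : ℕ) (hc₁ : c₁ = c / 2) (n : ℤ)
    (d₄ : ℕ → ℤ)
    (hd₄ : ∀ a : ℕ, a < c → Nat.Coprime a c →
      (8 * (a : ℤ) * d₄ a) ≡ -1 [ZMOD (c₁ : ℤ)]) :
    epsd c₁ *
      ∑ a ∈ (Finset.range c).filter (fun a => Nat.Coprime a c),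
        (jacobiSym (8 * (a : ℤ)) c₁ : ℂ) * e (((d₄ a * n : ℤ) : ℝ) / (c₁ : ℝ)) =
    (starRingEnd ℂ) (epsd c₁) *
      ∑ a ∈ (Finset.range c₁).filter (fun a => Nat.Coprime a c₁),
        (jacobiSym (a : ℤ) c₁ : ℂ) * e ((((a : ℤ) * n : ℤ) : ℝ) / (c₁ : ℝ)) := by
  obtain rfl : c = 2 * c₁ := by omega
  have hodd : Odd c₁ := Nat.odd_iff.mpr (by omega)
  have : NeZero c₁ := ⟨hodd.pos.ne'⟩
  have h8 : IsUnit (-8 : ZMod c₁) := by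
    have := (ZMod.isUnit_iff_coprime 8 c₁).mpr
      (Nat.Coprime.pow_left 3 (Nat.coprime_two_left.mpr hodd))
    exact_mod_cast this.neg
  have hterm : ∀ a ∈ (range (2 * c₁)).filter (fun a => a.Coprime (2 * c₁)),
      (jacobiSym (8 * (a : ℤ)) c₁ : ℂ) * e (((d₄ a * n : ℤ) : ℝ) / (c₁ : ℝ)) =
        jacobiSym (-1) c₁ * jacobiGaussTerm c₁ n ((-8 : ZMod c₁) * a)⁻¹.val := by
    intro a ha
    rw [mem_filter, mem_range] at ha
    rw [jacobiSym_mul_e_eq_of_mul_modEq n (hd₄ a ha.1 ha.2)]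
    push_cast
    ring_nf
  rw [sum_congr rfl hterm, ← mul_sum, ← mul_assoc, epsd_mul_jacobiSym_neg_one hodd,
    sum_filter_coprime_two_mul hodd (fun x => jacobiGaussTerm c₁ n (-8 * x)⁻¹.val),
    sum_filter_coprime_inv_mul h8 (fun x => jacobiGaussTerm c₁ n x.val)]
  refine congrArg _ (sum_congr rfl fun b hb => ?_)
  rw [ZMod.val_cast_of_lt (mem_range.mp (mem_filter.mp hb).1), jacobiGaussTerm]
end

section
/- Let T, m, y, L > 0 be real numbers. Define, for x > m²/L, A(x) := arcosh((L·x + m²)/(L·x − m²)) and h(x) := −T·A(x) − √(L·x·y), and set x₀ := 2·T·m/(L·√y) + m²/L. Then h(x₀) = −T·arcosh(1 + m·√y/T) − √(2·T·m·√y + y·m²), and the second derivative of h at x₀ equals h''(x₀) = −y·L^{3/2}/(4·T·m·√(x₀)). -/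
/-!
With `r = √(L x) > m` the arcosh collapses to a logarithm,
`arcosh ((r² + m²) / (r² - m²)) = log ((r + m) / (r - m))`, so `h = arcoshProfile T m y L` has
`h' x = L / (2 √(L x)) * (2 T m / (L x - m²) - √y)`.
The second factor vanishes exactly at `x₀ = arcoshProfileCriticalPoint T m y L`, where
`L x₀ - m² = 2 T m / √y`; hence `h'' x₀` is the first factor times the derivative
`-2 T m L / (L x₀ - m²)²` of the second one.
-/

noncomputable def arcosh (x : ℝ) : ℝ := Real.log (x + Real.sqrt (x ^ 2 - 1))

open Filter Topology

theorem arcosh_sq_add_sq_div_sq_sub_sq {r m : ℝ} (hm : 0 ≤ m) (hmr : m < r) :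
    arcosh ((r ^ 2 + m ^ 2) / (r ^ 2 - m ^ 2)) = Real.log (r + m) - Real.log (r - m) := by
  have hr : 0 < r := hm.trans_lt hmr
  have hsub : 0 < r - m := sub_pos.mpr hmr
  have hden : r ^ 2 - m ^ 2 = (r + m) * (r - m) := by ring
  have hsqrt : √(((r ^ 2 + m ^ 2) / (r ^ 2 - m ^ 2)) ^ 2 - 1) = 2 * r * m / (r ^ 2 - m ^ 2) := by
    rw [← Real.sqrt_sq (by rw [hden]; positivity : 0 ≤ 2 * r * m / (r ^ 2 - m ^ 2))]
    congr 1
    rw [hden]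
    field_simp
    ring
  rw [arcosh, hsqrt, ← Real.log_div (by positivity) hsub.ne', ← add_div, hden]
  congr 1
  field_simp
  ring

theorem rpow_three_div_two_eq_mul_sqrt {L : ℝ} (hL : 0 ≤ L) : L ^ ((3 : ℝ) / 2) = L * √L := by
  rw [show (3 : ℝ) / 2 = 1 + 1 / 2 by norm_num, Real.rpow_add' hL (by norm_num), Real.rpow_one,
    Real.sqrt_eq_rpow]

theorem HasDerivAt.differentiableAt_mul_of_eq_zero {𝕜 : Type*} [NontriviallyNormedField 𝕜]
    {f g : 𝕜 → 𝕜} {g' x : 𝕜} (hg : HasDerivAt g g' x) (hgx : g x = 0)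
    (hf : DifferentiableAt 𝕜 f x) :
    HasDerivAt (fun y => f y * g y) (f x * g') x := by
  have h := hf.hasDerivAt.mul hg
  rwa [hgx, mul_zero, zero_add] at h

noncomputable def arcoshProfile (T m y L x : ℝ) : ℝ :=
  -T * arcosh ((L * x + m ^ 2) / (L * x - m ^ 2)) - √(L * x * y)

noncomputable def arcoshProfileCriticalPoint (T m y L : ℝ) : ℝ :=
  2 * T * m / (L * √y) + m ^ 2 / L

section

variable {T m y L : ℝ}

theorem arcoshProfile_eq_log {x : ℝ} (hm : 0 ≤ m) (hx : m ^ 2 < L * x) :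
    arcoshProfile T m y L x =
      -T * (Real.log (√(L * x) + m) - Real.log (√(L * x) - m)) - √(L * x) * √y := by
  have hLx : 0 ≤ L * x := (sq_nonneg m).trans hx.le
  have hmr : m < √(L * x) := Real.lt_sqrt_of_sq_lt hx
  rw [arcoshProfile, ← arcosh_sq_add_sq_div_sq_sub_sq hm hmr, Real.sq_sqrt hLx, Real.sqrt_mul hLx]

theorem hasDerivAt_arcoshProfile {x : ℝ} (hm : 0 ≤ m) (hx : m ^ 2 < L * x) :
    HasDerivAt (arcoshProfile T m y L)
      (L / (2 * √(L * x)) * (2 * T * m / (L * x - m ^ 2) - √y)) x := by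
  have hLx : 0 < L * x := (sq_nonneg m).trans_lt hx
  have hmr : m < √(L * x) := Real.lt_sqrt_of_sq_lt hx
  have hr : HasDerivAt (fun x => √(L * x)) (L / (2 * √(L * x))) x := by
    simpa using ((hasDerivAt_id x).const_mul L).sqrt hLx.ne'
  have hlog := (((hr.add_const m).log (by positivity)).sub
    ((hr.sub_const m).log (sub_pos.mpr hmr).ne')).const_mul (-T) |>.sub (hr.mul_const √y)
  have hnear : ∀ᶠ x' in 𝓝 x, arcoshProfile T m y L x' =
      -T * (Real.log (√(L * x') + m) - Real.log (√(L * x') - m)) - √(L * x') * √y := by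
    filter_upwards [(isOpen_lt continuous_const (continuous_const.mul continuous_id)).mem_nhds hx]
      with x' hx' using arcoshProfile_eq_log hm hx'
  refine (hlog.congr_of_eventuallyEq hnear).congr_deriv ?_
  have hsq : L * x - m ^ 2 = (√(L * x) + m) * (√(L * x) - m) := by
    linear_combination -Real.sq_sqrt hLx.le
  rw [hsq]
  field_simp [(sub_pos.mpr hmr).ne']
  ring

theorem deriv_arcoshProfile_eventuallyEq {x : ℝ} (hm : 0 ≤ m) (hx : m ^ 2 < L * x) :
    deriv (arcoshProfile T m y L) =ᶠ[𝓝 x]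
      fun x => L / (2 * √(L * x)) * (2 * T * m / (L * x - m ^ 2) - √y) := by
  filter_upwards [(isOpen_lt continuous_const (continuous_const.mul continuous_id)).mem_nhds hx]
    with x hx using (hasDerivAt_arcoshProfile hm hx).deriv

theorem mul_arcoshProfileCriticalPoint_sub_sq (hy : 0 < y) (hL : L ≠ 0) :
    L * arcoshProfileCriticalPoint T m y L - m ^ 2 = 2 * T * m / √y := by
  have hsy : 0 < √y := Real.sqrt_pos.2 hy
  rw [arcoshProfileCriticalPoint]
  field_simp
  ring

theorem arcoshProfile_criticalPoint (hT : T ≠ 0) (hm : m ≠ 0) (hy : 0 < y) (hL : L ≠ 0) :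
    arcoshProfile T m y L (arcoshProfileCriticalPoint T m y L) =
      -T * arcosh (1 + m * √y / T) - √(2 * T * m * √y + y * m ^ 2) := by
  set x₀ := arcoshProfileCriticalPoint T m y L
  have hgap : L * x₀ - m ^ 2 = 2 * T * m / √y := mul_arcoshProfileCriticalPoint_sub_sq hy hL
  have hsy : 0 < √y := Real.sqrt_pos.2 hy
  have harg : (L * x₀ + m ^ 2) / (L * x₀ - m ^ 2) = 1 + m * √y / T := by
    rw [show L * x₀ + m ^ 2 = (L * x₀ - m ^ 2) + 2 * m ^ 2 by ring, hgap]
    field_simp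
  have hrad : L * x₀ * y = 2 * T * m * √y + y * m ^ 2 := by
    rw [show L * x₀ = (L * x₀ - m ^ 2) + m ^ 2 by ring, hgap, add_mul, div_mul_eq_mul_div,
      mul_div_assoc, Real.div_sqrt]
    ring
  rw [arcoshProfile, harg, hrad]

theorem deriv_deriv_arcoshProfile_criticalPoint (hT : 0 < T) (hm : 0 < m) (hy : 0 < y)
    (hL : 0 < L) :
    deriv (deriv (arcoshProfile T m y L)) (arcoshProfileCriticalPoint T m y L) =
      -y * L ^ ((3 : ℝ) / 2) / (4 * T * m * √(arcoshProfileCriticalPoint T m y L)) := by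
  set x₀ := arcoshProfileCriticalPoint T m y L
  have hgap : L * x₀ - m ^ 2 = 2 * T * m / √y := mul_arcoshProfileCriticalPoint_sub_sq hy hL.ne'
  have hsy : 0 < √y := Real.sqrt_pos.2 hy
  have hx₀m : m ^ 2 < L * x₀ := by rw [← sub_pos, hgap]; positivity
  have hLx₀ : 0 < L * x₀ := (sq_nonneg m).trans_lt hx₀m
  have hprefactor : DifferentiableAt ℝ (fun x => L / (2 * √(L * x))) x₀ := by
    fun_prop (disch := positivity)
  have hfactor : HasDerivAt (fun x => 2 * T * m / (L * x - m ^ 2) - √y)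
      (-(2 * T * m * L) / (L * x₀ - m ^ 2) ^ 2) x₀ :=
    ((hasDerivAt_const x₀ (2 * T * m)).div (((hasDerivAt_id' x₀).const_mul L).sub_const (m ^ 2))
      (sub_pos.2 hx₀m).ne').sub_const √y |>.congr_deriv (by ring)
  have hvanish : 2 * T * m / (L * x₀ - m ^ 2) - √y = 0 := by
    rw [hgap]; field_simp; ring
  rw [(deriv_arcoshProfile_eventuallyEq hm.le hx₀m).deriv_eq,
    (hfactor.differentiableAt_mul_of_eq_zero hvanish hprefactor).deriv, hgap, Real.sqrt_mul hL.le,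
    rpow_three_div_two_eq_mul_sqrt hL.le]
  have hsx : 0 < √x₀ := Real.sqrt_pos.2 (pos_of_mul_pos_right hLx₀ hL.le)
  have hsL : 0 < √L := Real.sqrt_pos.2 hL
  field_simp
  rw [Real.sq_sqrt hy.le, Real.sq_sqrt hL.le]
  ring

end

/-- the value and second derivative of
`h(x) = -T·arcosh((Lx + m²)/(Lx - m²)) - √(Lxy)` at the stationary point
`x₀ = 2Tm/(L√y) + m²/L`. -/
theorem stmt_14 (T m y L : ℝ) (hT : 0 < T) (hm : 0 < m) (hy : 0 < y) (hL : 0 < L) :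
    (fun x : ℝ => -T * arcosh ((L * x + m ^ 2) / (L * x - m ^ 2)) -
        Real.sqrt (L * x * y)) (2 * T * m / (L * Real.sqrt y) + m ^ 2 / L) =
      -T * arcosh (1 + m * Real.sqrt y / T) -
        Real.sqrt (2 * T * m * Real.sqrt y + y * m ^ 2) ∧
    deriv (deriv (fun x : ℝ => -T * arcosh ((L * x + m ^ 2) / (L * x - m ^ 2)) -
        Real.sqrt (L * x * y))) (2 * T * m / (L * Real.sqrt y) + m ^ 2 / L) =
      -y * L ^ ((3 : ℝ) / 2) /
        (4 * T * m * Real.sqrt (2 * T * m / (L * Real.sqrt y) + m ^ 2 / L)) :=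
  ⟨arcoshProfile_criticalPoint hT.ne' hm.ne' hy hL.ne',
    deriv_deriv_arcoshProfile_criticalPoint hT hm hy hL⟩
end

section
/- For every real number x with 1 ≤ x ≤ 2, one has arcosh(x)² ≥ x − 1. -/
/-- for `1 ≤ x ≤ 2`, `arcosh(x)² ≥ x - 1`. -/
theorem stmt_16 (x : ℝ) (h1 : 1 ≤ x) (h2 : x ≤ 2) : x - 1 ≤ arcosh x ^ 2 := by
  set s := Real.sqrt (x - 1) with hs
  have hs0 : 0 ≤ s := Real.sqrt_nonneg _
  have hs2 : s ^ 2 = x - 1 := Real.sq_sqrt (by linarith)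
  have hs1 : s ≤ 1 := by
    rw [show (1:ℝ) = Real.sqrt 1 by simp [Real.sqrt_one]]
    exact Real.sqrt_le_sqrt (by linarith)
  have hxsq : Real.sqrt (x ^ 2 - 1) = s * Real.sqrt (x + 1) := by
    rw [hs, ← Real.sqrt_mul (by linarith)]
    ring_nf
  have hsqrt2 : (1:ℝ) ≤ Real.sqrt 2 := by
    nlinarith [Real.sq_sqrt (by norm_num : (0:ℝ) ≤ 2), Real.sqrt_nonneg 2]
  have h2' : Real.sqrt 2 ≤ Real.sqrt (x + 1) := Real.sqrt_le_sqrt (by linarith)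
  have hexp : Real.exp s ≤ x + Real.sqrt (x ^ 2 - 1) := by
    have hb := Real.exp_bound' hs0 hs1 (n := 2) (by norm_num)
    have hb' : Real.exp s ≤ 1 + s + s ^ 2 * (3 / 4) := by
      convert hb using 1
      simp [Finset.sum_range_succ, Nat.factorial]
      ring
    rw [hxsq]
    nlinarith [mul_le_mul_of_nonneg_left h2' hs0]
  have hypos : (0:ℝ) < x + Real.sqrt (x ^ 2 - 1) := by
    have := Real.sqrt_nonneg (x ^ 2 - 1); linarith
  have hlog : s ≤ arcosh x := by
    rw [arcosh, Real.le_log_iff_exp_le hypos]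
    exact hexp
  calc x - 1 = s ^ 2 := hs2.symm
    _ ≤ arcosh x ^ 2 := by
        have h0 : 0 ≤ arcosh x := le_trans hs0 hlog
        nlinarith
end
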